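/- Every generalized weighted path order is a reduction order: for every weakly monotone well-founded ordered (F ∪ F#)-algebra A and every precedence ≿ on F, the relation >_gwpo, defined by s >_gwpo t iff s ≥_A t and s >_spo t (where >_spo is the semantic path order induced from the marked order pair (⊒∼, ⊐)), is a well-founded strict order on T(F,V) closed under contexts and closed under substitutions. -/
import Mathlib


/-- First-order terms over a signature `F` with arity function `ar` and variables `V`. -/
inductive Term (F : Type) (ar : F → ℕ) (V : Type) : Type where
  | var : V → Term F ar V
  | app : (f : F) → (Fin (ar f) → Term F ar V) → Term F ar V

namespace Term

variable {F V : Type} {ar : F → ℕ}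

/-- Application of a substitution `σ : V → Term F ar V` to a term. -/
def subst (σ : V → Term F ar V) : Term F ar V → Term F ar V
  | var v => σ v
  | app f args => app f (fun i => (args i).subst σ)

/-- Interpretation of a term in an `F`-algebra with carrier `A` under assignment `α`. -/
def eval {A : Type} (I : (f : F) → (Fin (ar f) → A) → A) (α : V → A) :
    Term F ar V → A
  | var v => α v
  | app f args => I f (fun i => (args i).eval I α)

/-- A term is a non-variable term (function application). -/
def IsApp : Term F ar V → Prop
  | var _ => False
  | app _ _ => True

end Term

section Algebra

variable {F V A : Type}

/-- `RC lt a b` : reflexive closure of the strict order `lt`, i.e. `a ≤ b`. -/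
def RC (lt : A → A → Prop) (a b : A) : Prop := lt a b ∨ a = b

variable (ar : F → ℕ) (I : (f : F) → (Fin (ar f) → A) → A) (lt : A → A → Prop)

/-- `s >_A t` : `[α](t) < [α](s)` for every assignment `α`. -/
def GTA (s t : Term F ar V) : Prop := ∀ α : V → A, lt (t.eval I α) (s.eval I α)

/-- `s ≥_A t` : `[α](t) ≤ [α](s)` for every assignment `α`. -/
def GEA (s t : Term F ar V) : Prop := ∀ α : V → A, RC lt (t.eval I α) (s.eval I α)

/-- The algebra is simple: `f_A(a_1, …, a_n) ≥ a_i`. -/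
def Simple : Prop := ∀ (f : F) (as : Fin (ar f) → A) (i : Fin (ar f)), RC lt (as i) (I f as)

/-- The algebra is weakly monotone: `a_i > b` implies
`f_A(a_1,…,a_i,…,a_n) ≥ f_A(a_1,…,b,…,a_n)`. -/
def WeaklyMonotone : Prop :=
  ∀ (f : F) (as : Fin (ar f) → A) (i : Fin (ar f)) (b : A),
    lt b (as i) → RC lt (I f (Function.update as i b)) (I f as)

end Algebra

section WPO

variable {F V A : Type} (ar : F → ℕ) (I : (f : F) → (Fin (ar f) → A) → A)
  (lt : A → A → Prop) (prec : F → F → Prop)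

mutual
  /-- The weighted path order induced by the algebra `(A, I, lt)` and the precedence `prec`. -/
  inductive WPO : Term F ar V → Term F ar V → Prop where
    /-- (1) `s >_A t`. -/
    | alg {s t} : GTA ar I lt s t → WPO s t
    /-- (2a) `s ≥_A t` and `s_i >_wpo t`. -/
    | sub {f ss t} (i : Fin (ar f)) :
        GEA ar I lt (Term.app f ss) t → WPO (ss i) t → WPO (Term.app f ss) t
    /-- (2a) `s ≥_A t` and `s_i = t`. -/
    | subEq {f ss t} (i : Fin (ar f)) :
        GEA ar I lt (Term.app f ss) t → ss i = t → WPO (Term.app f ss) t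
    /-- (2b-i) `s ≥_A t`, `s >_wpo t_j` for all `j`, and `f ≻ g`. -/
    | prc {f ss g ts} :
        GEA ar I lt (Term.app f ss) (Term.app g ts) →
        (∀ j, WPO (Term.app f ss) (ts j)) →
        prec f g → ¬ prec g f → WPO (Term.app f ss) (Term.app g ts)
    /-- (2b-ii) `s ≥_A t`, `s >_wpo t_j` for all `j`, `f ≿ g` and lex comparison of arguments. -/
    | lex {f ss g ts} :
        GEA ar I lt (Term.app f ss) (Term.app g ts) →
        (∀ j, WPO (Term.app f ss) (ts j)) →
        prec f g → WPOLex (List.ofFn ss) (List.ofFn ts) →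
        WPO (Term.app f ss) (Term.app g ts)

  /-- Lexicographic extension of `WPO` to argument lists (of possibly different lengths). -/
  inductive WPOLex : List (Term F ar V) → List (Term F ar V) → Prop where
    | head {s t l₁ l₂} : WPO s t → WPOLex (s :: l₁) (t :: l₂)
    | tail {s l₁ l₂} : WPOLex l₁ l₂ → WPOLex (s :: l₁) (s :: l₂)
    | longer {s l₁} : WPOLex (s :: l₁) []
end

end WPO

section SPO

variable {F V : Type} {ar : F → ℕ} (qge qgt : Term F ar V → Term F ar V → Prop)

mutual
  /-- The semantic path order induced by the order pair `(qge, qgt)` (`⊒∼`, `⊐`). -/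
  inductive SPO : Term F ar V → Term F ar V → Prop where
    /-- (1) `s_i >_spo t`. -/
    | sub {f ss t} (i : Fin (ar f)) : SPO (ss i) t → SPO (Term.app f ss) t
    /-- (1) `s_i = t`. -/
    | subEq {f ss t} (i : Fin (ar f)) : ss i = t → SPO (Term.app f ss) t
    /-- (2a) `s >_spo t_j` for all `j` and `s ⊐ t`. -/
    | gt {f ss g ts} : (∀ j, SPO (Term.app f ss) (ts j)) →
        qgt (Term.app f ss) (Term.app g ts) → SPO (Term.app f ss) (Term.app g ts)
    /-- (2b) `s >_spo t_j` for all `j`, `s ⊒∼ t` and lex comparison of arguments. -/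
    | lex {f ss g ts} : (∀ j, SPO (Term.app f ss) (ts j)) →
        qge (Term.app f ss) (Term.app g ts) →
        SPOLex (List.ofFn ss) (List.ofFn ts) → SPO (Term.app f ss) (Term.app g ts)

  /-- Lexicographic extension of `SPO` to argument lists. -/
  inductive SPOLex : List (Term F ar V) → List (Term F ar V) → Prop where
    | head {s t l₁ l₂} : SPO s t → SPOLex (s :: l₁) (t :: l₂)
    | tail {s l₁ l₂} : SPOLex l₁ l₂ → SPOLex (s :: l₁) (s :: l₂)
    | longer {s l₁} : SPOLex (s :: l₁) []
end

end SPO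

section Props

variable {F V : Type} {ar : F → ℕ}

/-- Closure under contexts: replacing one argument. -/
def ClosedCtx (R : Term F ar V → Term F ar V → Prop) : Prop :=
  ∀ (f : F) (args : Fin (ar f) → Term F ar V) (i : Fin (ar f)) (s t : Term F ar V),
    R s t → R (Term.app f (Function.update args i s)) (Term.app f (Function.update args i t))

/-- Closure under substitutions. -/
def ClosedSubst (R : Term F ar V → Term F ar V → Prop) : Prop :=
  ∀ (σ : V → Term F ar V) (s t : Term F ar V), R s t → R (s.subst σ) (t.subst σ)

/-- A reduction order: a well-founded strict order closed under contexts and substitutions. -/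
def ReductionOrder (R : Term F ar V → Term F ar V → Prop) : Prop :=
  (∀ s, ¬ R s s) ∧ Transitive R ∧ WellFounded (fun s t => R t s) ∧
    ClosedCtx R ∧ ClosedSubst R

/-- `Subterm t s` : `t` is a subterm of `s`. -/
inductive Subterm : Term F ar V → Term F ar V → Prop where
  | refl {t} : Subterm t t
  | arg {t f ss} (i : Fin (ar f)) : Subterm t (ss i) → Subterm t (Term.app f ss)

/-- `ProperSubterm t s` : `t` is a proper subterm of `s`. -/
def ProperSubterm (t s : Term F ar V) : Prop :=
  ∃ (f : F) (ss : Fin (ar f) → Term F ar V) (i : Fin (ar f)),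
    s = Term.app f ss ∧ Subterm t (ss i)

/-- The rewrite relation of a TRS `R`: closure of the rules under substitutions and contexts. -/
inductive Rewrite (R : Set (Term F ar V × Term F ar V)) : Term F ar V → Term F ar V → Prop where
  | rule {l r} (σ : V → Term F ar V) : (l, r) ∈ R → Rewrite R (l.subst σ) (r.subst σ)
  | ctx {s t} (f : F) (args : Fin (ar f) → Term F ar V) (i : Fin (ar f)) :
      Rewrite R s t →
      Rewrite R (Term.app f (Function.update args i s)) (Term.app f (Function.update args i t))

end Props

section Pair

variable {F V A : Type} (ar : F → ℕ) (I : (f : F) → (Fin (ar f) → A) → A)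
  (lt : A → A → Prop) (prec : F → F → Prop)

/-- `s ⊒∼ t` : both non-variable, and `s >_A t`, or `s ≥_A t` and `root(s) ≿ root(t)`. -/
def QGE (s t : Term F ar V) : Prop :=
  ∃ (f : F) (ss : Fin (ar f) → Term F ar V) (g : F) (ts : Fin (ar g) → Term F ar V),
    s = Term.app f ss ∧ t = Term.app g ts ∧
      (GTA ar I lt s t ∨ (GEA ar I lt s t ∧ prec f g))

/-- `s ⊐ t` : both non-variable, and `s >_A t`, or `s ≥_A t` and `root(s) ≻ root(t)`. -/
def QGT (s t : Term F ar V) : Prop :=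
  ∃ (f : F) (ss : Fin (ar f) → Term F ar V) (g : F) (ts : Fin (ar g) → Term F ar V),
    s = Term.app f ss ∧ t = Term.app g ts ∧
      (GTA ar I lt s t ∨ (GEA ar I lt s t ∧ prec f g ∧ ¬ prec g f))

variable (Im : (f : F) → (Fin (ar f) → A) → A)

/-- Interpretation of the marked term `t♯` (root symbol interpreted by `Im`). -/
def evalSharp (α : V → A) : Term F ar V → A
  | .var v => α v
  | .app f ts => Im f (fun i => (ts i).eval I α)

/-- `s♯ >_A t♯`. -/
def GTAS (s t : Term F ar V) : Prop :=
  ∀ α : V → A, lt (evalSharp ar I Im α t) (evalSharp ar I Im α s)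

/-- `s♯ ≥_A t♯`. -/
def GEAS (s t : Term F ar V) : Prop :=
  ∀ α : V → A, RC lt (evalSharp ar I Im α t) (evalSharp ar I Im α s)

/-- Marked version of `⊒∼` : `s♯ >_A t♯`, or `s♯ ≥_A t♯` and `root(s) ≿ root(t)`. -/
def QGES (s t : Term F ar V) : Prop :=
  ∃ (f : F) (ss : Fin (ar f) → Term F ar V) (g : F) (ts : Fin (ar g) → Term F ar V),
    s = Term.app f ss ∧ t = Term.app g ts ∧
      (GTAS ar I lt Im s t ∨ (GEAS ar I lt Im s t ∧ prec f g))

/-- Marked version of `⊐` : `s♯ >_A t♯`, or `s♯ ≥_A t♯` and `root(s) ≻ root(t)`. -/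
def QGTS (s t : Term F ar V) : Prop :=
  ∃ (f : F) (ss : Fin (ar f) → Term F ar V) (g : F) (ts : Fin (ar g) → Term F ar V),
    s = Term.app f ss ∧ t = Term.app g ts ∧
      (GTAS ar I lt Im s t ∨ (GEAS ar I lt Im s t ∧ prec f g ∧ ¬ prec g f))

/-- The generalized weighted path order: `s ≥_A t` and `s >_spo t` for the SPO induced
from the marked order pair. -/
def GWPO (s t : Term F ar V) : Prop :=
  GEA ar I lt s t ∧ SPO (QGES ar I lt prec Im) (QGTS ar I lt prec Im) s t

end Pair


section AuxSize

variable {F V : Type} {ar : F → ℕ}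

/-- Size of a term. -/
def tsize : Term F ar V → ℕ
  | .var _ => 1
  | .app _ ts => 1 + ∑ i, tsize (ts i)

lemma tsize_pos (t : Term F ar V) : 0 < tsize t := by
  cases t <;> simp [tsize]

lemma tsize_arg_lt {f : F} (ss : Fin (ar f) → Term F ar V) (i : Fin (ar f)) :
    tsize (ss i) < tsize (Term.app f ss) := by
  have h : tsize (ss i) ≤ ∑ j, tsize (ss j) :=
    Finset.single_le_sum (f := fun j => tsize (ss j)) (fun j _ => Nat.zero_le _) (Finset.mem_univ i)
  simp only [tsize]
  omega

lemma mem_ofFn_size {f : F} {ss : Fin (ar f) → Term F ar V} {a : Term F ar V}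
    (h : a ∈ List.ofFn ss) : tsize a < tsize (Term.app f ss) := by
  rw [List.mem_ofFn] at h
  obtain ⟨i, rfl⟩ := h
  exact tsize_arg_lt ss i

end AuxSize

section AuxSPO

variable {F V : Type} {ar : F → ℕ} {qge qgt : Term F ar V → Term F ar V → Prop}

lemma spolex_nil {l : List (Term F ar V)} (h : SPOLex qge qgt [] l) : False := by
  nomatch h

lemma spo_var {v : V} {t : Term F ar V} (h : SPO qge qgt (Term.var v) t) : False := by
  nomatch h

lemma spolex_trans :
    ∀ (l1 l2 l3 : List (Term F ar V)),
      (∀ a b c, a ∈ l1 → b ∈ l2 → c ∈ l3 →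
        SPO qge qgt a b → SPO qge qgt b c → SPO qge qgt a c) →
      SPOLex qge qgt l1 l2 → SPOLex qge qgt l2 l3 → SPOLex qge qgt l1 l3
  | [], _, _, _, h12, _ => absurd h12 spolex_nil
  | a :: l1, l2, l3, helem, h12, h23 => by
    cases h12 with
    | head hab =>
      cases h23 with
      | head hbc =>
        exact SPOLex.head (helem _ _ _ (by simp) (by simp) (by simp) hab hbc)
      | tail h23' => exact SPOLex.head hab
      | longer => exact SPOLex.longer
    | longer => exact absurd h23 spolex_nil
    | tail h12' =>
      cases h23 with
      | head hac => exact SPOLex.head hac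
      | tail h23' =>
        exact SPOLex.tail (spolex_trans _ _ _
          (fun x y z hx hy hz => helem x y z (by simp [hx]) (by simp [hy]) (by simp [hz]))
          h12' h23')
      | longer => exact SPOLex.longer

lemma spo_trans_aux
    (c1 : ∀ s t u : Term F ar V, qge s t → qgt t u → qgt s u)
    (c2 : ∀ s t u : Term F ar V, qgt s t → qge t u → qgt s u)
    (c3 : ∀ s t u : Term F ar V, qge s t → qge t u → qge s u)
    (c4 : ∀ s t : Term F ar V, qgt s t → qge s t) :
    ∀ (n : ℕ) (s t u : Term F ar V), tsize s + tsize t + tsize u ≤ n →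
      SPO qge qgt s t → SPO qge qgt t u → SPO qge qgt s u := by
  intro n
  induction n with
  | zero =>
    intro s t u h _ _
    have := tsize_pos s; have := tsize_pos t; have := tsize_pos u; omega
  | succ n ih =>
    intro s t u hn h1 h2
    cases h1 with
    | @sub f ss _ i h =>
      exact SPO.sub i (ih _ _ _ (by have := tsize_arg_lt ss i; omega) h h2)
    | subEq i h =>
      exact SPO.sub i (h.symm ▸ h2)
    | @gt f ss g ts hargs hgt =>
      cases h2 with
      | sub j h =>
        exact ih _ _ _ (by have := tsize_arg_lt ts j; omega) (hargs j) h
      | subEq j h =>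
        exact h ▸ hargs j
      | @gt _ _ h us hargs2 hgt2 =>
        refine SPO.gt (fun k => ih _ _ _ ?_ (SPO.gt hargs hgt) (hargs2 k)) (c1 _ _ _ (c4 _ _ hgt) hgt2)
        have := tsize_arg_lt us k; omega
      | @lex _ _ h us hargs2 hge2 hlex2 =>
        refine SPO.gt (fun k => ih _ _ _ ?_ (SPO.gt hargs hgt) (hargs2 k)) (c2 _ _ _ hgt hge2)
        have := tsize_arg_lt us k; omega
    | @lex f ss g ts hargs hge hlex =>
      cases h2 with
      | sub j h =>
        exact ih _ _ _ (by have := tsize_arg_lt ts j; omega) (hargs j) h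
      | subEq j h =>
        exact h ▸ hargs j
      | @gt _ _ h us hargs2 hgt2 =>
        refine SPO.gt (fun k => ih _ _ _ ?_ (SPO.lex hargs hge hlex) (hargs2 k)) (c1 _ _ _ hge hgt2)
        have := tsize_arg_lt us k; omega
      | @lex _ _ h us hargs2 hge2 hlex2 =>
        refine SPO.lex (fun k => ih _ _ _ ?_ (SPO.lex hargs hge hlex) (hargs2 k)) (c3 _ _ _ hge hge2)
          (spolex_trans _ _ _ ?_ hlex hlex2)
        · have := tsize_arg_lt us k; omega
        · intro a b c ha hb hc hab hbc
          refine ih _ _ _ ?_ hab hbc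
          have := mem_ofFn_size ha; have := mem_ofFn_size hb; have := mem_ofFn_size hc
          omega

end AuxSPO

section AuxEval

variable {F V A : Type} {ar : F → ℕ} {I Im : (f : F) → (Fin (ar f) → A) → A}
  {lt : A → A → Prop} {prec : F → F → Prop}

lemma eval_subst (I : (f : F) → (Fin (ar f) → A) → A) (σ : V → Term F ar V) (α : V → A) :
    ∀ t : Term F ar V, Term.eval I α (Term.subst σ t) =
      Term.eval I (fun v => Term.eval I α (σ v)) t
  | .var v => rfl
  | .app f ts => by
    simp only [Term.subst, Term.eval]
    congr 1
    funext i
    exact eval_subst I σ α (ts i)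

lemma evalSharp_subst_app (σ : V → Term F ar V) (α : V → A) (f : F)
    (ts : Fin (ar f) → Term F ar V) :
    evalSharp ar I Im α (Term.subst σ (Term.app f ts)) =
      evalSharp ar I Im α (Term.app f ts) →
      True := fun _ => trivial

lemma evalSharp_subst (σ : V → Term F ar V) (α : V → A) (f : F)
    (ts : Fin (ar f) → Term F ar V) :
    evalSharp ar I Im α (Term.subst σ (Term.app f ts)) =
      evalSharp ar I Im (fun v => Term.eval I α (σ v)) (Term.app f ts) := by
  simp only [Term.subst, evalSharp]
  congr 1
  funext i
  exact eval_subst I σ α (ts i)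

lemma gea_subst (σ : V → Term F ar V) {s t : Term F ar V}
    (h : GEA ar I lt s t) : GEA ar I lt (Term.subst σ s) (Term.subst σ t) := by
  intro α
  rw [eval_subst, eval_subst]
  exact h _

lemma qges_subst (σ : V → Term F ar V) {s t : Term F ar V}
    (h : QGES ar I lt prec Im s t) :
    QGES ar I lt prec Im (Term.subst σ s) (Term.subst σ t) := by
  obtain ⟨f, ss, g, ts, rfl, rfl, hc⟩ := h
  refine ⟨f, fun i => Term.subst σ (ss i), g, fun j => Term.subst σ (ts j), rfl, rfl, ?_⟩
  rcases hc with hgt | ⟨hge, hp⟩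
  · left
    intro α
    have h1 := evalSharp_subst (I := I) (Im := Im) σ α f ss
    have h2 := evalSharp_subst (I := I) (Im := Im) σ α g ts
    simp only [Term.subst] at h1 h2 ⊢
    rw [h1, h2]
    exact hgt _
  · right
    refine ⟨?_, hp⟩
    intro α
    have h1 := evalSharp_subst (I := I) (Im := Im) σ α f ss
    have h2 := evalSharp_subst (I := I) (Im := Im) σ α g ts
    simp only [Term.subst] at h1 h2 ⊢
    rw [h1, h2]
    exact hge _

lemma qgts_subst (σ : V → Term F ar V) {s t : Term F ar V}
    (h : QGTS ar I lt prec Im s t) :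
    QGTS ar I lt prec Im (Term.subst σ s) (Term.subst σ t) := by
  obtain ⟨f, ss, g, ts, rfl, rfl, hc⟩ := h
  refine ⟨f, fun i => Term.subst σ (ss i), g, fun j => Term.subst σ (ts j), rfl, rfl, ?_⟩
  rcases hc with hgt | ⟨hge, hp⟩
  · left
    intro α
    have h1 := evalSharp_subst (I := I) (Im := Im) σ α f ss
    have h2 := evalSharp_subst (I := I) (Im := Im) σ α g ts
    simp only [Term.subst] at h1 h2 ⊢
    rw [h1, h2]
    exact hgt _
  · right
    refine ⟨?_, hp⟩
    intro α
    have h1 := evalSharp_subst (I := I) (Im := Im) σ α f ss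
    have h2 := evalSharp_subst (I := I) (Im := Im) σ α g ts
    simp only [Term.subst] at h1 h2 ⊢
    rw [h1, h2]
    exact hge _

end AuxEval

section AuxSubst

variable {F V : Type} {ar : F → ℕ} {qge qgt : Term F ar V → Term F ar V → Prop}

lemma spolex_map (σ : V → Term F ar V) :
    ∀ (l1 l2 : List (Term F ar V)),
      (∀ a b, a ∈ l1 → b ∈ l2 → SPO qge qgt a b →
        SPO qge qgt (Term.subst σ a) (Term.subst σ b)) →
      SPOLex qge qgt l1 l2 →
      SPOLex qge qgt (l1.map (Term.subst σ)) (l2.map (Term.subst σ))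
  | [], _, _, h12 => absurd h12 spolex_nil
  | a :: l1, l2, helem, h12 => by
    cases h12 with
    | head hab =>
      exact SPOLex.head (helem _ _ (by simp) (by simp) hab)
    | tail h12' =>
      exact SPOLex.tail (spolex_map σ _ _
        (fun x y hx hy => helem x y (by simp [hx]) (by simp [hy])) h12')
    | longer => exact SPOLex.longer

lemma spo_subst (σ : V → Term F ar V)
    (hge : ∀ {s t : Term F ar V}, qge s t → qge (Term.subst σ s) (Term.subst σ t))
    (hgt : ∀ {s t : Term F ar V}, qgt s t → qgt (Term.subst σ s) (Term.subst σ t)) :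
    ∀ (n : ℕ) (s t : Term F ar V), tsize s + tsize t ≤ n → SPO qge qgt s t →
      SPO qge qgt (Term.subst σ s) (Term.subst σ t) := by
  intro n
  induction n with
  | zero =>
    intro s t h _
    have := tsize_pos s; have := tsize_pos t; omega
  | succ n ih =>
    intro s t hn h
    cases h with
    | @sub f ss _ i h =>
      have h' := ih _ _ (by have := tsize_arg_lt ss i; omega) h
      exact SPO.sub (f := f) (ss := fun i => Term.subst σ (ss i)) i h'
    | @subEq f ss _ i h =>
      exact SPO.subEq (f := f) (ss := fun i => Term.subst σ (ss i)) i
        (congrArg (Term.subst σ) h)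
    | @gt f ss g ts hargs hqgt =>
      have hargs' : ∀ j, SPO qge qgt (Term.subst σ (Term.app f ss)) (Term.subst σ (ts j)) :=
        fun j => ih _ _ (by have := tsize_arg_lt ts j; omega) (hargs j)
      exact SPO.gt (f := f) (ss := fun i => Term.subst σ (ss i))
        (g := g) (ts := fun j => Term.subst σ (ts j)) hargs' (hgt hqgt)
    | @lex f ss g ts hargs hqge hlex =>
      have hargs' : ∀ j, SPO qge qgt (Term.subst σ (Term.app f ss)) (Term.subst σ (ts j)) :=
        fun j => ih _ _ (by have := tsize_arg_lt ts j; omega) (hargs j)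
      have hlex' := spolex_map σ _ _
        (fun a b ha hb hab => ih _ _
          (by have := mem_ofFn_size ha; have := mem_ofFn_size hb; omega) hab) hlex
      rw [List.map_ofFn, List.map_ofFn] at hlex'
      exact SPO.lex (f := f) (ss := fun i => Term.subst σ (ss i))
        (g := g) (ts := fun j => Term.subst σ (ts j)) hargs' (hge hqge) hlex'

end AuxSubst

section AuxCompat

variable {F V A : Type} {ar : F → ℕ} {I Im : (f : F) → (Fin (ar f) → A) → A}
  {lt : A → A → Prop} {prec : F → F → Prop}

lemma rc_lt_lt (ltr : Transitive lt) {a b c : A} (h1 : RC lt a b) (h2 : lt b c) : lt a c := by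
  rcases h1 with h | rfl
  · exact ltr h h2
  · exact h2

lemma lt_rc_lt (ltr : Transitive lt) {a b c : A} (h1 : lt a b) (h2 : RC lt b c) : lt a c := by
  rcases h2 with h | rfl
  · exact ltr h1 h
  · exact h1

lemma rc_trans (ltr : Transitive lt) {a b c : A} (h1 : RC lt a b) (h2 : RC lt b c) : RC lt a c := by
  rcases h1 with h | rfl
  · exact Or.inl (lt_rc_lt ltr h h2)
  · exact h2

lemma qgts_to_qges {s t : Term F ar V} (h : QGTS ar I lt prec Im s t) :
    QGES ar I lt prec Im s t := by
  obtain ⟨f, ss, g, ts, rfl, rfl, hc⟩ := h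
  exact ⟨f, ss, g, ts, rfl, rfl, hc.imp id (fun ⟨h1, h2, _⟩ => ⟨h1, h2⟩)⟩

lemma qges_qgts (ltr : Transitive lt) (hpt : ∀ f g h, prec f g → prec g h → prec f h) {s t u : Term F ar V} (h1 : QGES ar I lt prec Im s t)
    (h2 : QGTS ar I lt prec Im t u) : QGTS ar I lt prec Im s u := by
  obtain ⟨f, ss, g, ts, rfl, rfl, hc1⟩ := h1
  obtain ⟨g', ts', h, us, heq, rfl, hc2⟩ := h2
  injection heq with hg hts
  subst hg
  refine ⟨f, ss, h, us, rfl, rfl, ?_⟩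
  rcases hc1 with ha | ⟨ha, hfg⟩ <;> rcases hc2 with hb | ⟨hb, hgh, hhg⟩
  · exact Or.inl (fun α => ltr (hb α) (ha α))
  · exact Or.inl (fun α => rc_lt_lt ltr (hb α) (ha α))
  · exact Or.inl (fun α => lt_rc_lt ltr (hb α) (ha α))
  · refine Or.inr ⟨fun α => rc_trans ltr (hb α) (ha α), hpt _ _ _ hfg hgh, ?_⟩
    intro hhf
    exact hhg (hpt _ _ _ hhf hfg)

lemma qgts_qges (ltr : Transitive lt) (hpt : ∀ f g h, prec f g → prec g h → prec f h) {s t u : Term F ar V} (h1 : QGTS ar I lt prec Im s t)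
    (h2 : QGES ar I lt prec Im t u) : QGTS ar I lt prec Im s u := by
  obtain ⟨f, ss, g, ts, rfl, rfl, hc1⟩ := h1
  obtain ⟨g', ts', h, us, heq, rfl, hc2⟩ := h2
  injection heq with hg hts
  subst hg
  refine ⟨f, ss, h, us, rfl, rfl, ?_⟩
  rcases hc1 with ha | ⟨ha, hfg, hgf⟩ <;> rcases hc2 with hb | ⟨hb, hgh⟩
  · exact Or.inl (fun α => ltr (hb α) (ha α))
  · exact Or.inl (fun α => rc_lt_lt ltr (hb α) (ha α))
  · exact Or.inl (fun α => lt_rc_lt ltr (hb α) (ha α))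
  · refine Or.inr ⟨fun α => rc_trans ltr (hb α) (ha α), hpt _ _ _ hfg hgh, ?_⟩
    intro hhf
    exact hgf (hpt _ _ _ hgh hhf)

lemma qges_trans (ltr : Transitive lt) (hpt : ∀ f g h, prec f g → prec g h → prec f h) {s t u : Term F ar V} (h1 : QGES ar I lt prec Im s t)
    (h2 : QGES ar I lt prec Im t u) : QGES ar I lt prec Im s u := by
  obtain ⟨f, ss, g, ts, rfl, rfl, hc1⟩ := h1
  obtain ⟨g', ts', h, us, heq, rfl, hc2⟩ := h2
  injection heq with hg hts
  subst hg
  refine ⟨f, ss, h, us, rfl, rfl, ?_⟩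
  rcases hc1 with ha | ⟨ha, hfg⟩ <;> rcases hc2 with hb | ⟨hb, hgh⟩
  · exact Or.inl (fun α => ltr (hb α) (ha α))
  · exact Or.inl (fun α => rc_lt_lt ltr (hb α) (ha α))
  · exact Or.inl (fun α => lt_rc_lt ltr (hb α) (ha α))
  · exact Or.inr ⟨fun α => rc_trans ltr (hb α) (ha α), hpt _ _ _ hfg hgh⟩

end AuxCompat

section AuxWF

variable {F V A : Type} {ar : F → ℕ} {I Im : (f : F) → (Fin (ar f) → A) → A}
  {lt : A → A → Prop} {prec : F → F → Prop}

/-- Number of symbols weakly below `f` in the precedence. -/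
noncomputable def pmeas (prec : F → F → Prop) (f : F) : ℕ := Set.ncard {g | prec f g}

lemma pmeas_lt [Fintype F] (hpt : ∀ f g h, prec f g → prec g h → prec f h)
    {f g : F} (h1 : prec f g) (h2 : ¬ prec g f) (hrefl : ∀ f, prec f f) :
    pmeas prec g < pmeas prec f := by
  apply Set.ncard_lt_ncard _ (Set.toFinite _)
  rw [Set.ssubset_iff_subset_ne]
  constructor
  · intro x hx
    exact hpt _ _ _ h1 hx
  · intro hEq
    have hf : f ∈ {h | prec f h} := hrefl f
    rw [← hEq] at hf
    exact h2 hf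

lemma qgts_wf [Fintype F] [Nonempty A] (lt_wf : WellFounded lt)
    (hpt : ∀ f g h, prec f g → prec g h → prec f h) (hrefl : ∀ f, prec f f) :
    WellFounded (fun t s : Term F ar V => QGTS ar I lt prec Im s t) := by
  classical
  let α0 : V → A := fun _ => Classical.arbitrary A
  let μ : Term F ar V → A × ℕ := fun t =>
    (evalSharp ar I Im α0 t, match t with | .var _ => 0 | .app f _ => pmeas prec f)
  refine Subrelation.wf (r := InvImage (Prod.Lex lt (· < ·)) μ) ?_
    (InvImage.wf μ (WellFounded.prod_lex lt_wf (Nat.lt_wfRel.wf)))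
  intro t s h
  obtain ⟨f, ss, g, ts, rfl, rfl, hc⟩ := h
  show Prod.Lex lt (· < ·) (μ (Term.app g ts)) (μ (Term.app f ss))
  rcases hc with hgt | ⟨hge, hfg, hgf⟩
  · exact Prod.Lex.left _ _ (hgt α0)
  · rcases hge α0 with hlt | heq
    · exact Prod.Lex.left _ _ hlt
    · show Prod.Lex lt (· < ·) (evalSharp ar I Im α0 (Term.app g ts), pmeas prec g)
        (evalSharp ar I Im α0 (Term.app f ss), pmeas prec f)
      rw [heq]
      exact Prod.Lex.right _ (pmeas_lt hpt hfg hgf hrefl)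

end AuxWF

section AuxAcc

variable {F V : Type} {ar : F → ℕ} {qge qgt : Term F ar V → Term F ar V → Prop}

/-- `t` is strongly normalizing for SPO. -/
def SNt (qge qgt : Term F ar V → Term F ar V → Prop) (t : Term F ar V) : Prop :=
  Acc (fun a b => SPO qge qgt b a) t

/-- Restricted lexicographic extension used for the well-foundedness proof. -/
def relL (qge qgt : Term F ar V → Term F ar V → Prop) (n : ℕ)
    (l' l : List (Term F ar V)) : Prop :=
  SPOLex qge qgt l l' ∧ (∀ x ∈ l', SNt qge qgt x) ∧ l'.length ≤ n

lemma accL_nil (n : ℕ) : Acc (relL qge qgt n) ([] : List (Term F ar V)) := by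
  constructor
  intro m hm
  exact absurd hm.1 spolex_nil

lemma accL_cons (n : ℕ)
    (ihn : ∀ l, (∀ x ∈ l, SNt qge qgt x) → l.length ≤ n → Acc (relL qge qgt n) l) :
    ∀ x : Term F ar V, SNt qge qgt x → ∀ l', (∀ y ∈ l', SNt qge qgt y) → l'.length ≤ n →
      Acc (relL qge qgt (n + 1)) (x :: l') := by
  intro x hx
  induction hx with
  | intro x _ ihx =>
    intro l' hl' hlen
    have hal' : Acc (relL qge qgt n) l' := ihn l' hl' hlen
    clear hl' hlen
    induction hal' with
    | intro l' _ ihl' =>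
      constructor
      rintro m ⟨hlex, hmSN, hmlen⟩
      cases hlex with
      | head hxy =>
        refine ihx _ hxy _ ?_ ?_
        · intro y hy
          exact hmSN y (by simp [hy])
        · simpa using hmlen
      | tail hlex' =>
        exact ihl' _ ⟨hlex', fun y hy => hmSN y (by simp [hy]), by simpa using hmlen⟩
      | longer =>
        exact accL_nil n.succ
      -- note: `longer` gives m = []

lemma accL : ∀ (n : ℕ) (l : List (Term F ar V)),
    (∀ x ∈ l, SNt qge qgt x) → l.length ≤ n → Acc (relL qge qgt n) l := by
  intro n
  induction n with
  | zero =>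
    intro l _ hl
    have hnil : l = [] := List.length_eq_zero_iff.mp (Nat.le_zero.mp hl)
    subst hnil
    exact accL_nil 0
  | succ n ihn =>
    intro l hSN hlen
    cases l with
    | nil => exact accL_nil (n + 1)
    | cons x l' =>
      exact accL_cons n ihn x (hSN x (by simp)) l'
        (fun y hy => hSN y (by simp [hy])) (by simpa using hlen)

lemma spo_acc_main [Fintype F] {N : ℕ} (harN : ∀ g : F, ar g ≤ N)
    (c1 : ∀ s t u : Term F ar V, qge s t → qgt t u → qgt s u)
    (c3 : ∀ s t u : Term F ar V, qge s t → qge t u → qge s u) :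
    ∀ s : Term F ar V, Acc (fun a b => qgt b a) s →
    ∀ l : List (Term F ar V), Acc (relL qge qgt N) l →
    ∀ (g : F) (ts : Fin (ar g) → Term F ar V), (∀ i, SNt qge qgt (ts i)) →
      List.ofFn ts = l → (s = Term.app g ts ∨ qge s (Term.app g ts)) →
      SNt qge qgt (Term.app g ts) := by
  intro s hs
  induction hs with
  | intro s _ IH1 =>
    intro l hl
    induction hl with
    | intro l _ IH2 =>
      intro g ts hts hofn hrel
      suffices h : ∀ (m : ℕ) (t : Term F ar V), tsize t ≤ m →
          SPO qge qgt (Term.app g ts) t → SNt qge qgt t by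
        exact ⟨_, fun t ht => h (tsize t) t le_rfl ht⟩
      intro m
      induction m with
      | zero =>
        intro t ht _
        have := tsize_pos t; omega
      | succ m ihm =>
        intro t ht hspo
        cases hspo with
        | sub i h => exact Acc.inv (hts i) h
        | subEq i h => exact h ▸ hts i
        | @gt _ _ h us hargs hqgt =>
          have hSNus : ∀ j, SNt qge qgt (us j) :=
            fun j => ihm (us j) (by have := tsize_arg_lt us j; omega) (hargs j)
          have hq : qgt s (Term.app h us) := by
            rcases hrel with rfl | hge
            · exact hqgt
            · exact c1 _ _ _ hge hqgt
          refine IH1 _ hq (List.ofFn us) (accL N (List.ofFn us) ?_ ?_) h us hSNus rfl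
            (Or.inl rfl)
          · intro x hx
            rw [List.mem_ofFn] at hx
            obtain ⟨j, rfl⟩ := hx
            exact hSNus j
          · simpa using harN h
        | @lex _ _ h us hargs hqge hlex =>
          have hSNus : ∀ j, SNt qge qgt (us j) :=
            fun j => ihm (us j) (by have := tsize_arg_lt us j; omega) (hargs j)
          have hq : qge s (Term.app h us) := by
            rcases hrel with rfl | hge
            · exact hqge
            · exact c3 _ _ _ hge hqge
          refine IH2 (List.ofFn us) ⟨?_, ?_, ?_⟩ h us hSNus rfl (Or.inr hq)
          · rw [← hofn]
            exact hlex
          · intro x hx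
            rw [List.mem_ofFn] at hx
            obtain ⟨j, rfl⟩ := hx
            exact hSNus j
          · simpa using harN h

lemma spo_wf [Fintype F]
    (qgtwf : WellFounded (fun t s : Term F ar V => qgt s t))
    (c1 : ∀ s t u : Term F ar V, qge s t → qgt t u → qgt s u)
    (c3 : ∀ s t u : Term F ar V, qge s t → qge t u → qge s u) :
    WellFounded (fun t s : Term F ar V => SPO qge qgt s t) := by
  constructor
  intro t
  induction t with
  | var v =>
    constructor
    intro y hy
    exact absurd hy spo_var
  | app f ss ih =>
    refine spo_acc_main (N := Finset.univ.sup ar) (fun g => Finset.le_sup (Finset.mem_univ g))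
      c1 c3 (Term.app f ss) (qgtwf.apply _) (List.ofFn ss) (accL _ _ ?_ ?_) f ss ih rfl
      (Or.inl rfl)
    · intro x hx
      rw [List.mem_ofFn] at hx
      obtain ⟨i, rfl⟩ := hx
      exact ih i
    · simpa using Finset.le_sup (f := ar) (Finset.mem_univ f)

end AuxAcc

section AuxCtx

variable {F V A : Type} {ar : F → ℕ}

lemma eval_update (I : (f : F) → (Fin (ar f) → A) → A) (α : V → A) {f : F}
    (args : Fin (ar f) → Term F ar V) (i : Fin (ar f)) (s : Term F ar V) :
    (fun j => Term.eval I α (Function.update args i s j)) =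
      Function.update (fun j => Term.eval I α (args j)) i (Term.eval I α s) := by
  funext j
  by_cases hj : j = i
  · subst hj; simp
  · simp [Function.update_of_ne hj]

/-- Weak monotonicity lifted to one-argument replacement. -/
lemma ctx_ge {I J : (f : F) → (Fin (ar f) → A) → A} {lt : A → A → Prop}
    (hm : WeaklyMonotone ar J lt) {s t : Term F ar V}
    (hst : GEA ar I lt s t) (α : V → A) {f : F}
    (args : Fin (ar f) → Term F ar V) (i : Fin (ar f)) :
    RC lt (J f (fun j => Term.eval I α (Function.update args i t j)))
      (J f (fun j => Term.eval I α (Function.update args i s j))) := by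
  rw [eval_update, eval_update]
  rcases hst α with hlt | heq
  · have h := hm f (Function.update (fun j => Term.eval I α (args j)) i (Term.eval I α s)) i
      (Term.eval I α t) (by simpa using hlt)
    simpa [Function.update_idem] using h
  · rw [heq]
    exact Or.inr rfl

lemma spolex_single {qge qgt : Term F ar V → Term F ar V → Prop} :
    ∀ (m : ℕ) (u v : Fin m → Term F ar V) (i : Fin m),
      SPO qge qgt (u i) (v i) → (∀ j, j ≠ i → u j = v j) →
      SPOLex qge qgt (List.ofFn u) (List.ofFn v)
  | 0, _, _, i, _, _ => i.elim0
  | m + 1, u, v, i, h, hne => by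
    rw [List.ofFn_succ, List.ofFn_succ]
    by_cases hi : i = 0
    · subst hi
      exact SPOLex.head h
    · obtain ⟨j, rfl⟩ := Fin.eq_succ_of_ne_zero hi
      have h0 : u 0 = v 0 := hne 0 (Ne.symm (Fin.succ_ne_zero j))
      rw [h0]
      refine SPOLex.tail (spolex_single m (fun k => u k.succ) (fun k => v k.succ) j h ?_)
      intro k hk
      exact hne k.succ (by simpa [Fin.succ_inj] using hk)

end AuxCtx

/-- Every generalized weighted path order is a reduction order: for
every weakly monotone well-founded ordered `(F ∪ F♯)`-algebra (interpretations `I` for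
`F`, `Im` for `F♯`) and every precedence on `F`, the relation
`s >_gwpo t` iff `s ≥_A t ∧ s >_spo t` (SPO induced from the marked order pair) is a
well-founded strict order closed under contexts and substitutions. -/
theorem gwpo_is_reduction_order
    {F V A : Type} [Fintype F] [Countable V] [Infinite V] [Nonempty A]
    (ar : F → ℕ) (I Im : (f : F) → (Fin (ar f) → A) → A) (lt : A → A → Prop)
    (lt_irrefl : ∀ a, ¬ lt a a) (lt_trans : Transitive lt)
    (lt_wf : WellFounded lt)
    (hmono : WeaklyMonotone ar I lt) (hmonoS : WeaklyMonotone ar Im lt)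
    (prec : F → F → Prop) (prec_refl : ∀ f, prec f f)
    (prec_trans : ∀ f g h, prec f g → prec g h → prec f h) :
    ReductionOrder (GWPO (V := V) ar I lt prec Im) := by
  classical
  have c1 : ∀ {s t u : Term F ar V}, QGES ar I lt prec Im s t →
      QGTS ar I lt prec Im t u → QGTS ar I lt prec Im s u :=
    fun h1 h2 => qges_qgts lt_trans prec_trans h1 h2
  have c2 : ∀ {s t u : Term F ar V}, QGTS ar I lt prec Im s t →
      QGES ar I lt prec Im t u → QGTS ar I lt prec Im s u :=
    fun h1 h2 => qgts_qges lt_trans prec_trans h1 h2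
  have c3 : ∀ {s t u : Term F ar V}, QGES ar I lt prec Im s t →
      QGES ar I lt prec Im t u → QGES ar I lt prec Im s u :=
    fun h1 h2 => qges_trans lt_trans prec_trans h1 h2
  have c4 : ∀ {s t : Term F ar V}, QGTS ar I lt prec Im s t →
      QGES ar I lt prec Im s t := fun h => qgts_to_qges h
  have hspowf : WellFounded (fun t s : Term F ar V =>
      SPO (QGES ar I lt prec Im) (QGTS ar I lt prec Im) s t) :=
    spo_wf (qgts_wf lt_wf prec_trans prec_refl) (fun _ _ _ => c1) (fun _ _ _ => c3)
  have hwf : WellFounded (fun s t : Term F ar V => GWPO ar I lt prec Im t s) :=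
    Subrelation.wf (fun h => h.2) hspowf
  refine ⟨?_, ?_, hwf, ?_, ?_⟩
  · -- irreflexive
    intro s
    have hacc := hwf.apply s
    induction hacc with
    | intro x _ ih => exact fun hxx => ih x hxx hxx
  · -- transitive
    intro s t u h1 h2
    refine ⟨fun α => rc_trans lt_trans (h2.1 α) (h1.1 α), ?_⟩
    exact spo_trans_aux (qge := QGES ar I lt prec Im) (qgt := QGTS ar I lt prec Im) (fun _ _ _ h1 h2 => c1 h1 h2) (fun _ _ _ h1 h2 => c2 h1 h2) (fun _ _ _ h1 h2 => c3 h1 h2) (fun _ _ h => c4 h) (tsize s + tsize t + tsize u) s t u le_rfl h1.2 h2.2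
  · -- closed under contexts
    intro f args i s t hst
    obtain ⟨hgea, hspo⟩ := hst
    constructor
    · intro α
      simp only [Term.eval]
      exact ctx_ge hmono hgea α args i
    · have hargs : ∀ j, SPO (QGES ar I lt prec Im) (QGTS ar I lt prec Im)
          (Term.app f (Function.update args i s)) (Function.update args i t j) := by
        intro j
        by_cases hj : j = i
        · subst hj
          rw [Function.update_self]
          exact SPO.sub j (by rw [Function.update_self]; exact hspo)
        · rw [Function.update_of_ne hj]
          exact SPO.subEq j (Function.update_of_ne hj s args)
      have hqge : QGES ar I lt prec Im (Term.app f (Function.update args i s))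
          (Term.app f (Function.update args i t)) := by
        refine ⟨f, _, f, _, rfl, rfl, Or.inr ⟨?_, prec_refl f⟩⟩
        intro α
        simp only [evalSharp]
        exact ctx_ge hmonoS hgea α args i
      refine SPO.lex hargs hqge (spolex_single _ _ _ i ?_ ?_)
      · rw [Function.update_self, Function.update_self]
        exact hspo
      · intro j hj
        rw [Function.update_of_ne hj, Function.update_of_ne hj]
  · -- closed under substitutions
    intro σ s t hst
    obtain ⟨hgea, hspo⟩ := hst
    refine ⟨gea_subst σ hgea, ?_⟩
    exact spo_subst σ (fun {a b} h => qges_subst σ h) (fun {a b} h => qgts_subst σ h)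
      (tsize s + tsize t) s t le_rfl hspo
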